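/- arXiv:2301.10463 — 2 statements merged into one kernel-verified Lean document; each statement's English description precedes it below -/
import Mathlib

section
/- Fix a positive integer d and a Kupisch series ℓ = (ℓ₀,…,ℓ_{n−1}) of type A_n, i.e., ℓ₀ = 1 and 2 ≤ ℓ_i ≤ ℓ_{i−1} + 1 for 1 ≤ i ≤ n−1. Define os_ℓ^{d+1} = { y ∈ os_n^{d+1} : y_d − y₀ + 1 ≤ ℓ_{y_d} }. Then for any x, z ∈ os_ℓ^{d+1} with x ⇝ τ_d(z) and z_d − x₀ + 1 ≤ ℓ_{z_d}, every y ∈ os_n^{d+1} with y_i ∈ {x_i, z_i} for all i satisfies y ∈ os_ℓ^{d+1}. -/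
/-- `x` represents an element of `os_n^{d+1}`: a non-decreasing `(d+1)`-tuple of integers
in `{0,…,n-1}` (only indices `0,…,d` are relevant). -/
def InOsZ (n d : ℕ) (x : ℕ → ℤ) : Prop :=
  (∀ i < d, x i ≤ x (i + 1)) ∧ ∀ i ≤ d, 0 ≤ x i ∧ x i < n

/-- The relation `x ⇝ w`: `x₀ ≤ w₀ ≤ x₁ ≤ w₁ ≤ ⋯ ≤ x_d ≤ w_d`. -/
def LeadsToZ (d : ℕ) (x w : ℕ → ℤ) : Prop :=
  x 0 ≤ w 0 ∧ ∀ j < d, w j ≤ x (j + 1) ∧ x (j + 1) ≤ w (j + 1)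

/-- `τ_d(z) = (z₀−1, …, z_d−1)`. -/
def tauD (z : ℕ → ℤ) : ℕ → ℤ := fun i => z i - 1

/-- A Kupisch series of type `A_n`: `ℓ₀ = 1` and `2 ≤ ℓ_i ≤ ℓ_{i−1}+1` for `1 ≤ i ≤ n−1`. -/
def IsKupischA (n : ℕ) (l : ℕ → ℤ) : Prop :=
  l 0 = 1 ∧ ∀ i, 0 < i → i < n → 2 ≤ l i ∧ l i ≤ l (i - 1) + 1

/-- `os_ℓ^{d+1} = { y ∈ os_n^{d+1} : y_d − y₀ + 1 ≤ ℓ_{y_d} }`. -/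
def InOsL (n d : ℕ) (l : ℕ → ℤ) (y : ℕ → ℤ) : Prop :=
  InOsZ n d y ∧ y d - y 0 + 1 ≤ l (y d).toNat

/-- For `x, z ∈ os_ℓ^{d+1}` with `x ⇝ τ_d(z)` and `z_d − x₀ + 1 ≤ ℓ_{z_d}`, every
`y ∈ os_n^{d+1}` with `y_i ∈ {x_i, z_i}` for all `i` lies in `os_ℓ^{d+1}`. -/
theorem stmt_17 (n d : ℕ) (hn : 0 < n) (hd : 0 < d) (l : ℕ → ℤ) (hl : IsKupischA n l)
    (x z : ℕ → ℤ) (hx : InOsL n d l x) (hz : InOsL n d l z)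
    (hlt : LeadsToZ d x (tauD z)) (hlen : z d - x 0 + 1 ≤ l (z d).toNat)
    (y : ℕ → ℤ) (hy1 : InOsZ n d y) (hy2 : ∀ i ≤ d, y i = x i ∨ y i = z i) :
    InOsL n d l y := by
  refine ⟨hy1, ?_⟩
  have h0 : x 0 ≤ z 0 - 1 := hlt.1
  rcases hy2 d le_rfl with hdd | hdd <;> rcases hy2 0 (Nat.zero_le d) with h00 | h00 <;>
    rw [hdd, h00]
  · exact hx.2
  · have := hx.2; linarith
  · exact hlen
  · exact hz.2
end

section
/- Fix positive integers n, d and a Kupisch series ℓ of type A_n. Let x, z ∈ os_ℓ^{d+1} with x ⇝ τ_d(z) and z_d − x₀ + 1 > ℓ_{z_d}, and suppose y ∈ os_ℓ^{d+1} satisfies y_i ∈ {x_i, z_i} for all i, with y_d = z_d and y ≠ z. Then y₀ = z₀, the index k = min{ i : z_{i−1} ≤ x_i } exists (considering i ≥ 1), and the tuple w = (z₀,…,z_{k−1}, x_k,…,x_{d−1}, z_d) lies in os_ℓ^{d+1} and satisfies w ≤ y componentwise with w_d = y_d. -/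
/-- Combinatorial reduction for higher Nakayama algebras of type A: if
`x, z ∈ os_ℓ^{d+1}`, `x ⇝ τ_d(z)`, `z_d − x₀ + 1 > ℓ_{z_d}` and `y ∈ os_ℓ^{d+1}`
satisfies `y_i ∈ {x_i, z_i}`, `y_d = z_d`, `y ≠ z`, then `y₀ = z₀`, the index
`k = min{ i ≥ 1 : z_{i−1} ≤ x_i }` exists, and
`w = (z₀,…,z_{k−1}, x_k,…,x_{d−1}, z_d)` lies in `os_ℓ^{d+1}` with `w ≤ y` and
`w_d = y_d`. -/
theorem stmt_18 (n d : ℕ) (hn : 0 < n) (hd : 0 < d) (l : ℕ → ℤ) (hl : IsKupischA n l)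
    (x z : ℕ → ℤ) (hx : InOsL n d l x) (hz : InOsL n d l z)
    (hlt : LeadsToZ d x (tauD z)) (hlen : l (z d).toNat < z d - x 0 + 1)
    (y : ℕ → ℤ) (hy : InOsL n d l y) (hy2 : ∀ i ≤ d, y i = x i ∨ y i = z i)
    (hyd : y d = z d) (hne : ∃ i ≤ d, y i ≠ z i) :
    y 0 = z 0 ∧
    ∃ k, 1 ≤ k ∧ k ≤ d - 1 ∧ z (k - 1) ≤ x k ∧
      (∀ j, 1 ≤ j → j < k → x j < z (j - 1)) ∧
      InOsL n d l (fun i => if i < k then z i else if i < d then x i else z i) ∧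
      (∀ i ≤ d, (if i < k then z i else if i < d then x i else z i) ≤ y i) ∧
      ((fun i => if i < k then z i else if i < d then x i else z i) d) = y d := by
  classical
  obtain ⟨⟨hxmono, hxbd⟩, hxlen⟩ := hx
  obtain ⟨⟨hzmono, hzbd⟩, hzlen⟩ := hz
  obtain ⟨⟨hymono, hybd⟩, hylen⟩ := hy
  obtain ⟨hlt0, hlt1⟩ := hlt
  simp only [tauD] at hlt0 hlt1
  have hxz : ∀ i ≤ d, x i < z i := by
    intro i hi
    rcases Nat.eq_zero_or_pos i with h0 | h1
    · subst h0; linarith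
    · have h := hlt1 (i - 1) (by omega)
      rw [Nat.sub_add_cancel h1] at h
      linarith [h.2]
  have hy0 : y 0 = z 0 := by
    rcases hy2 0 (Nat.zero_le d) with h | h
    · exfalso; rw [hyd, h] at hylen; linarith
    · exact h
  have hP : ∃ i, i ≤ d ∧ y i ≠ z i := hne
  set m := Nat.find hP with hm
  obtain ⟨hmd, hmne⟩ := Nat.find_spec hP
  rw [← hm] at hmd hmne
  have hmmin : ∀ j < m, j ≤ d → y j = z j := by
    intro j hj hjd
    have h := Nat.find_min hP hj
    push_neg at h
    exact h hjd
  have hm1 : 1 ≤ m := by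
    rcases Nat.eq_zero_or_pos m with h | h
    · rw [h] at hmne; exact absurd hy0 hmne
    · exact h
  have hmd' : m < d := by
    rcases lt_or_eq_of_le hmd with h | h
    · exact h
    · rw [h] at hmne; exact absurd hyd hmne
  have hym : y m = x m := (hy2 m hmd).resolve_right hmne
  have hprev : y (m - 1) = z (m - 1) := hmmin (m - 1) (by omega) (by omega)
  have hzm : z (m - 1) ≤ x m := by
    have h := hymono (m - 1) (by omega)
    rw [Nat.sub_add_cancel hm1] at h
    rw [hprev, hym] at h
    exact h
  have hQ : ∃ i, 1 ≤ i ∧ z (i - 1) ≤ x i := ⟨m, hm1, hzm⟩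
  set k := Nat.find hQ with hk
  obtain ⟨hk1, hkzx⟩ := Nat.find_spec hQ
  rw [← hk] at hk1 hkzx
  have hkm : k ≤ m := Nat.find_min' hQ ⟨hm1, hzm⟩
  have hkd : k ≤ d - 1 := by omega
  have hkmin : ∀ j, 1 ≤ j → j < k → x j < z (j - 1) := by
    intro j h1 hj
    have h := Nat.find_min hQ hj
    push_neg at h
    exact h h1
  refine ⟨hy0, k, hk1, hkd, hkzx, hkmin, ⟨⟨?_, ?_⟩, ?_⟩, ?_, ?_⟩
  · -- monotone
    intro i hi
    dsimp only
    by_cases h1 : i + 1 < k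
    · rw [if_pos (by omega : i < k), if_pos h1]
      exact hzmono i hi
    · by_cases h2 : i < k
      · have e : i + 1 = k := by omega
        rw [if_pos h2, if_neg h1, if_pos (show i + 1 < d by omega), e]
        have e2 : i = k - 1 := by omega
        rw [e2]
        exact hkzx
      · rw [if_neg h2, if_neg h1, if_pos hi]
        by_cases h3 : i + 1 < d
        · rw [if_pos h3]
          exact hxmono i hi
        · rw [if_neg h3]
          have h4 := hxmono i hi
          have h5 := hxz (i + 1) (by omega)
          linarith
  · -- bounds
    intro i hi
    dsimp only
    split_ifs
    exacts [hzbd i hi, hxbd i hi, hzbd i hi]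
  · -- length
    dsimp only
    rw [if_neg (by omega : ¬ d < k), if_neg (lt_irrefl d), if_pos (by omega : 0 < k)]
    exact hzlen
  · -- w ≤ y
    intro i hi
    by_cases h1 : i < k
    · rw [if_pos h1, hmmin i (by omega) hi]
    · rw [if_neg h1]
      by_cases h2 : i < d
      · rw [if_pos h2]
        rcases hy2 i hi with h | h
        · rw [h]
        · rw [h]; exact le_of_lt (hxz i hi)
      · rw [if_neg h2]
        have e : i = d := by omega
        rw [e, hyd]
  · dsimp only
    rw [if_neg (by omega : ¬ d < k), if_neg (lt_irrefl d), hyd]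
end
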